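/- arXiv:1705.08778 — 2 statements merged into one kernel-verified Lean document; each statement's English description precedes it below -/
import Mathlib

section
/- Assume (H2): there exist constants A₀ > 0 and M₀ > 0 such that g(x)/x ≥ A₀ for all |x| ≥ M₀, where g : ℝ → ℝ is continuous. Then there exists c₀ > 0 such that for every c ≥ c₀ the level set V^{−1}(c) = {(x,y) ∈ ℝ² : y²/2 + G(x) = c} is a closed curve which is star-shaped about the origin, i.e., every ray emanating from the origin intersects V^{−1}(c) in exactly one point. -/
open Real Filter Set Topology

/-- `Gfun g x = ∫₀ˣ g(u) du`. -/
noncomputable def Gfun (g : ℝ → ℝ) (x : ℝ) : ℝ := ∫ u in (0:ℝ)..x, g u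

/-- The energy `V(x,y) = y²/2 + G(x)`. -/
noncomputable def Vfun (g : ℝ → ℝ) (q : ℝ × ℝ) : ℝ := q.2 ^ 2 / 2 + Gfun g q.1

/-- A simple closed curve in the plane: the image of a continuous `2π`-periodic map
which is injective on a period. -/
def IsSimpleClosedCurve (C : Set (ℝ × ℝ)) : Prop :=
  ∃ φ : ℝ → ℝ × ℝ, Continuous φ ∧ Function.Periodic φ (2 * π) ∧
    (∀ s ∈ Set.Ico (0:ℝ) (2 * π), ∀ t ∈ Set.Ico (0:ℝ) (2 * π), φ s = φ t → s = t) ∧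
    C = Set.range φ

/-!
Along the ray of angle `θ`, `r · ∂ᵣ V = y² + x g(x)` at `(x, y) = (r cos θ, r sin θ)`. By (H2)
this is at least `min 1 A₀ · r² - C`, so `V` grows at least linearly along every ray beyond a
radius `R` independent of `θ`. Taking `c₀` above the maximum of `V` on the disc of radius `R`,
every ray meets `V⁻¹(c)` exactly once, at a radius `ρ(θ) > R`. Strict monotonicity along rays
makes `ρ` continuous, and `θ ↦ ρ(θ) (cos θ, sin θ)` parametrizes the level set as a simple closed
curve.
-/

theorem eq_of_cos_eq_of_sin_eq {s t : ℝ} (hs : s ∈ Ico 0 (2 * π)) (ht : t ∈ Ico 0 (2 * π))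
    (hcos : cos s = cos t) (hsin : sin s = sin t) : s = t := by
  have : Fact (0 < 2 * π) := ⟨two_pi_pos⟩
  exact (AddCircle.coe_eq_coe_iff_of_mem_Ico (a := 0) (by simpa using hs) (by simpa using ht)).1
    (Real.Angle.cos_sin_inj hcos hsin)

theorem exists_polar_eq {q : ℝ × ℝ} (hq : q ≠ 0) :
    ∃ θ r : ℝ, 0 < r ∧ (r * cos θ, r * sin θ) = q := by
  set z : ℂ := ⟨q.1, q.2⟩
  have hz : z ≠ 0 := fun h => hq (Prod.ext (congrArg Complex.re h) (congrArg Complex.im h))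
  exact ⟨z.arg, ‖z‖, norm_pos_iff.2 hz,
    Prod.ext (Complex.norm_mul_cos_arg z) (Complex.norm_mul_sin_arg z)⟩

theorem eq_and_eq_of_polar_eq {r r' s t : ℝ} (hr : 0 < r) (hr' : 0 < r') (hs : s ∈ Ico 0 (2 * π))
    (ht : t ∈ Ico 0 (2 * π)) (h : (r * cos s, r * sin s) = (r' * cos t, r' * sin t)) :
    r = r' ∧ s = t := by
  obtain ⟨hx, hy⟩ := Prod.mk.inj h
  have hsq : r ^ 2 = r' ^ 2 := by
    linear_combination (r * cos s + r' * cos t) * hx + (r * sin s + r' * sin t) * hy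
      - r ^ 2 * sin_sq_add_cos_sq s + r' ^ 2 * sin_sq_add_cos_sq t
  obtain rfl : r = r' := (pow_left_inj₀ hr.le hr'.le two_ne_zero).1 hsq
  exact ⟨rfl, eq_of_cos_eq_of_sin_eq hs ht (mul_left_cancel₀ hr.ne' hx)
    (mul_left_cancel₀ hr.ne' hy)⟩

theorem isSimpleClosedCurve_of_polar {S : Set (ℝ × ℝ)} {ρ : ℝ → ℝ} (hρ : Continuous ρ)
    (hρ_pos : ∀ θ, 0 < ρ θ) (h0 : (0 : ℝ × ℝ) ∉ S)
    (hS : ∀ θ r, 0 < r → ((r * cos θ, r * sin θ) ∈ S ↔ r = ρ θ)) : IsSimpleClosedCurve S := by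
  have hmem θ : (ρ θ * cos θ, ρ θ * sin θ) ∈ S := (hS θ _ (hρ_pos θ)).2 rfl
  have hper : Function.Periodic ρ (2 * π) := fun θ =>
    (hS θ _ (hρ_pos _)).1 (by simpa using hmem (θ + 2 * π))
  refine ⟨fun θ => (ρ θ * cos θ, ρ θ * sin θ), by fun_prop, fun θ => by simp [hper θ],
    fun s hs t ht hst => (eq_and_eq_of_polar_eq (hρ_pos s) (hρ_pos t) hs ht hst).2, ?_⟩
  ext q
  refine ⟨fun hq => ?_, by rintro ⟨θ, rfl⟩; exact hmem θ⟩
  obtain ⟨θ, r, hr, rfl⟩ := exists_polar_eq (ne_of_mem_of_not_mem hq h0)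
  exact ⟨θ, by rw [(hS θ r hr).1 hq]⟩

theorem continuous_of_strictMonoOn_of_apply_eq {X : Type*} [TopologicalSpace X]
    {f : X → ℝ → ℝ} {R c : ℝ} {ρ : X → ℝ} (hf : ∀ r, Continuous fun x => f x r)
    (hmono : ∀ x, StrictMonoOn (f x) (Ici R)) (hρR : ∀ x, R < ρ x) (hρ : ∀ x, f x (ρ x) = c) :
    Continuous ρ := by
  refine continuous_iff_continuousAt.2 fun x₀ => tendsto_order.2 ⟨fun a ha => ?_, fun b hb => ?_⟩
  · set a' := max a ((R + ρ x₀) / 2)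
    have ha'R : R ≤ a' := le_max_of_le_right (by linarith [hρR x₀])
    have hfa' : f x₀ a' < c :=
      hρ x₀ ▸ hmono x₀ ha'R (hρR x₀).le (max_lt ha (by linarith [hρR x₀]))
    filter_upwards [(hf a').continuousAt.eventually_lt continuousAt_const hfa'] with x hx
    refine lt_of_le_of_lt (le_max_left _ _ : a ≤ a') (lt_of_not_ge fun h => ?_)
    linarith [(hmono x).monotoneOn (hρR x).le ha'R h, hρ x]
  · have hbR : R ≤ b := (hρR x₀).le.trans hb.le
    have hfb : c < f x₀ b := hρ x₀ ▸ hmono x₀ (hρR x₀).le hbR hb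
    filter_upwards [continuousAt_const.eventually_lt (hf b).continuousAt hfb] with x hx
    refine lt_of_not_ge fun h => ?_
    linarith [(hmono x).monotoneOn hbR (hρR x).le h, hρ x]

section Energy

variable {g : ℝ → ℝ}

theorem hasDerivAt_Gfun (hg : Continuous g) (x : ℝ) : HasDerivAt (Gfun g) (g x) x :=
  intervalIntegral.integral_hasDerivAt_right (hg.intervalIntegrable _ _)
    (hg.stronglyMeasurableAtFilter _ _) hg.continuousAt

theorem continuous_Vfun (hg : Continuous g) : Continuous (Vfun g) := by
  have : Continuous (Gfun g) :=
    continuous_iff_continuousAt.2 fun x => (hasDerivAt_Gfun hg x).continuousAt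
  unfold Vfun
  fun_prop

theorem Vfun_zero : Vfun g 0 = 0 := by
  simp [Vfun, Gfun]

noncomputable def Vray (g : ℝ → ℝ) (θ r : ℝ) : ℝ := Vfun g (r * cos θ, r * sin θ)

theorem continuous_Vray (hg : Continuous g) (θ : ℝ) : Continuous (Vray g θ) :=
  (continuous_Vfun hg).comp (by fun_prop)

theorem continuous_Vray_angle (hg : Continuous g) (r : ℝ) : Continuous fun θ => Vray g θ r :=
  (continuous_Vfun hg).comp (by fun_prop)

theorem hasDerivAt_Vray (hg : Continuous g) (θ r : ℝ) :
    HasDerivAt (Vray g θ) (r * sin θ ^ 2 + g (r * cos θ) * cos θ) r := by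
  have hy : HasDerivAt (fun r : ℝ => (r * sin θ) ^ 2 / 2) (r * sin θ ^ 2) r := by
    refine ((((hasDerivAt_id r).mul_const (sin θ)).pow 2).div_const 2).congr_deriv ?_
    simp only [id]
    ring
  have hx : HasDerivAt (fun r : ℝ => Gfun g (r * cos θ)) (g (r * cos θ) * cos θ) r := by
    simpa [Function.comp_def] using
      (hasDerivAt_Gfun hg (r * cos θ)).comp r ((hasDerivAt_id r).mul_const (cos θ))
  exact hy.add hx

theorem exists_mul_sq_sub_le_mul_apply (hg : Continuous g) {A M : ℝ}
    (hH2 : ∀ x : ℝ, M ≤ |x| → A ≤ g x / x) : ∃ C, 0 ≤ C ∧ ∀ x, A * x ^ 2 - C ≤ x * g x := by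
  obtain ⟨C, hC⟩ := (isCompact_Icc (a := -M) (b := M)).bddAbove_image
    (f := fun x => A * x ^ 2 - x * g x) (by fun_prop : Continuous _).continuousOn
  refine ⟨max C 0, le_max_right _ _, fun x => ?_⟩
  rcases le_or_gt M |x| with hx | hx
  · have hsq : x ^ 2 * (g x / x) = x * g x := by
      rcases eq_or_ne x 0 with rfl | hx0
      · simp
      · field_simp
    nlinarith [mul_le_mul_of_nonneg_left (hH2 x hx) (sq_nonneg x), le_max_right C 0]
  · have := hC ⟨x, abs_le.1 hx.le, rfl⟩
    linarith [le_max_left C 0]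

theorem exists_le_deriv_Vray (hg : Continuous g) {A M : ℝ} (hA : 0 < A)
    (hH2 : ∀ x : ℝ, M ≤ |x| → A ≤ g x / x) :
    ∃ R m, 0 < R ∧ 0 < m ∧ ∀ θ r, R ≤ r → m ≤ r * sin θ ^ 2 + g (r * cos θ) * cos θ := by
  obtain ⟨C, hC, hgC⟩ := exists_mul_sq_sub_le_mul_apply hg hH2
  set m := min 1 A
  have hm : 0 < m := lt_min one_pos hA
  refine ⟨C / m + 1, m, by positivity, hm, fun θ r hr => ?_⟩
  have hr1 : 1 ≤ r := le_trans (by simp [div_nonneg hC hm.le]) hr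
  have hrad : m * r ^ 2 - C ≤ r * (r * sin θ ^ 2 + g (r * cos θ) * cos θ) :=
    calc m * r ^ 2 - C = m * (r * sin θ) ^ 2 + m * (r * cos θ) ^ 2 - C := by
          linear_combination m * r ^ 2 * (sin_sq_add_cos_sq θ).symm
      _ ≤ (r * sin θ) ^ 2 + (A * (r * cos θ) ^ 2 - C) := by
          nlinarith [min_le_left 1 A, min_le_right 1 A, sq_nonneg (r * sin θ),
            sq_nonneg (r * cos θ)]
      _ ≤ (r * sin θ) ^ 2 + r * cos θ * g (r * cos θ) := by grw [hgC]
      _ = r * (r * sin θ ^ 2 + g (r * cos θ) * cos θ) := by ring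
  have hCm : C ≤ m * (r - 1) := (div_le_iff₀' hm).1 (by linarith)
  exact le_of_mul_le_mul_left (by nlinarith) (by linarith : (0 : ℝ) < r)

theorem mul_sub_le_Vray_sub (hg : Continuous g) {R m θ r s : ℝ}
    (hderiv : ∀ r, R ≤ r → m ≤ r * sin θ ^ 2 + g (r * cos θ) * cos θ) (hr : R ≤ r) (hrs : r ≤ s) :
    m * (s - r) ≤ Vray g θ s - Vray g θ r :=
  (convex_Ici R).mul_sub_le_image_sub_of_le_deriv (continuous_Vray hg θ).continuousOn
    (fun x _ => (hasDerivAt_Vray hg θ x).differentiableAt.differentiableWithinAt)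
    (fun x hx => (hasDerivAt_Vray hg θ x).deriv ▸ hderiv x (interior_subset hx))
    r hr s (hr.trans hrs) hrs

theorem exists_Vray_le (hg : Continuous g) (R : ℝ) :
    ∃ K, ∀ θ r, 0 ≤ r → r ≤ R → Vray g θ r ≤ K := by
  obtain ⟨K, hK⟩ := (isCompact_closedBall (0 : ℝ × ℝ) R).bddAbove_image
    (continuous_Vfun hg).continuousOn
  refine ⟨K, fun θ r hr hrR => hK ⟨_, ?_, rfl⟩⟩
  simp only [Metric.mem_closedBall, dist_zero_right, Prod.norm_def, norm_mul, Real.norm_eq_abs,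
    abs_of_nonneg hr, max_le_iff]
  exact ⟨by nlinarith [abs_cos_le_one θ], by nlinarith [abs_sin_le_one θ]⟩

theorem exists_radius_Vray_eq (hg : Continuous g) {A M : ℝ} (hA : 0 < A)
    (hH2 : ∀ x : ℝ, M ≤ |x| → A ≤ g x / x) :
    ∃ c₀, 0 < c₀ ∧ ∀ c, c₀ ≤ c → ∃ ρ : ℝ → ℝ, Continuous ρ ∧ (∀ θ, 0 < ρ θ) ∧
      ∀ θ r, 0 < r → (Vray g θ r = c ↔ r = ρ θ) := by
  obtain ⟨R, m, hR, hm, hderiv⟩ := exists_le_deriv_Vray hg hA hH2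
  obtain ⟨K, hK⟩ := exists_Vray_le hg R
  refine ⟨max K 0 + 1, by positivity, fun c hc => ?_⟩
  have hKc : K < c := by linarith [le_max_left K 0]
  have hmono θ : StrictMonoOn (Vray g θ) (Ici R) := fun r hr s _ hrs => by
    nlinarith [mul_sub_le_Vray_sub hg (hderiv θ) hr hrs.le]
  have hroot θ : ∃ r, R < r ∧ Vray g θ r = c := by
    have htop : Tendsto (Vray g θ) atTop atTop := by
      refine tendsto_atTop_mono' _ (f₁ := fun s => m * (s - R) + Vray g θ R)
        ((eventually_ge_atTop R).mono fun s hs =>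
          le_sub_iff_add_le.1 (mul_sub_le_Vray_sub hg (hderiv θ) le_rfl hs)) ?_
      exact tendsto_atTop_add_const_right _ _
        ((tendsto_atTop_add_const_right _ _ tendsto_id).const_mul_atTop hm)
    obtain ⟨r, hRr, hr⟩ := intermediate_value_Ici (continuous_Vray hg θ).continuousOn htop
      ((hK θ R hR.le le_rfl).trans hKc.le)
    exact ⟨r, lt_of_le_of_ne hRr (by rintro rfl; linarith [hK θ R hR.le le_rfl]), hr⟩
  choose ρ hρR hρ using hroot
  have hR_lt θ r (hr : 0 < r) (hrc : Vray g θ r = c) : R < r :=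
    lt_of_not_ge fun h => by linarith [hK θ r hr.le h]
  refine ⟨ρ, continuous_of_strictMonoOn_of_apply_eq (continuous_Vray_angle hg) hmono hρR hρ,
    fun θ => hR.trans (hρR θ), fun θ r hr => ⟨fun hrc => ?_, fun h => h ▸ hρ θ⟩⟩
  exact (hmono θ).injOn (hR_lt θ r hr hrc).le (hρR θ).le (hrc.trans (hρ θ).symm)

end Energy

theorem level_sets_star_shaped_general
    (g : ℝ → ℝ) (hg : Continuous g)
    (A₀ M₀ : ℝ) (hA₀ : 0 < A₀)
    (hH2 : ∀ x : ℝ, M₀ ≤ |x| → A₀ ≤ g x / x) :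
    ∃ c₀ : ℝ, 0 < c₀ ∧ ∀ c : ℝ, c₀ ≤ c →
      IsSimpleClosedCurve {q : ℝ × ℝ | Vfun g q = c} ∧
      ∀ θ : ℝ, ∃! r : ℝ, 0 < r ∧ Vfun g (r * Real.cos θ, r * Real.sin θ) = c := by
  obtain ⟨c₀, hc₀, hρ⟩ := exists_radius_Vray_eq hg hA₀ hH2
  refine ⟨c₀, hc₀, fun c hc => ?_⟩
  obtain ⟨ρ, hρ_cont, hρ_pos, hρ_iff⟩ := hρ c hc
  have h0 : (0 : ℝ × ℝ) ∉ {q | Vfun g q = c} := by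
    simp only [mem_ofPred_eq, Vfun_zero]
    exact (hc₀.trans_le hc).ne
  exact ⟨isSimpleClosedCurve_of_polar hρ_cont hρ_pos h0 hρ_iff,
    fun θ => ⟨ρ θ, ⟨hρ_pos θ, (hρ_iff θ _ (hρ_pos θ)).2 rfl⟩,
      fun r hr => (hρ_iff θ r hr.1).1 hr.2⟩⟩

/-- Under (H2), there exists `c₀ > 0` such that for every `c ≥ c₀`
the level set `V⁻¹(c)` is a closed curve which is star-shaped about the origin:
every ray emanating from the origin intersects `V⁻¹(c)` in exactly one point. -/
theorem level_sets_star_shaped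
    (g : ℝ → ℝ) (hg : Continuous g)
    (A₀ M₀ : ℝ) (hA₀ : 0 < A₀) (hM₀ : 0 < M₀)
    (hH2 : ∀ x : ℝ, M₀ ≤ |x| → A₀ ≤ g x / x) :
    ∃ c₀ : ℝ, 0 < c₀ ∧ ∀ c : ℝ, c₀ ≤ c →
      IsSimpleClosedCurve {q : ℝ × ℝ | Vfun g q = c} ∧
      ∀ θ : ℝ, ∃! r : ℝ, 0 < r ∧ Vfun g (r * Real.cos θ, r * Real.sin θ) = c :=
  level_sets_star_shaped_general g hg A₀ M₀ hA₀ hH2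
end

section
/- Assume g : ℝ → ℝ is continuous and (H2) holds: there exist constants A₀ > 0 and M₀ > 0 such that g(x)/x ≥ A₀ for all |x| ≥ M₀. Then there exist constants c₀ > 0 and A₁ > 0 such that for every c ≥ c₀ and every (z, w) ∈ ℝ² with w²/2 + G(z) = c, one has w² + z·g(z) ≥ A₁(z² + w²). -/
open Real Filter Set Topology

/-!
Bound `|g| ≤ K` on `[-M₀, M₀]`. Where `|z| ≤ M₀`, both `|G(z)|` and `|z g(z)|` are at most `K M₀`,
so on a high enough level curve the kinetic term `w²` is large and dominates `z²` and `z g(z)`.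
Where `|z| ≥ M₀`, (H2) gives `z g(z) ≥ A₀ z²` directly.
-/

lemma Continuous.exists_nonneg_bound_of_abs_le {g : ℝ → ℝ} (hg : Continuous g) (M : ℝ) :
    ∃ K, 0 ≤ K ∧ ∀ u, |u| ≤ M → |g u| ≤ K := by
  obtain ⟨K, hK⟩ := (isCompact_closedBall (0 : ℝ) M).exists_bound_of_continuousOn hg.continuousOn
  refine ⟨max K 0, le_max_right _ _, fun u hu => (hK u ?_).trans (le_max_left _ _)⟩
  simpa using hu

lemma abs_Gfun_le {g : ℝ → ℝ} {K z : ℝ} (hK : ∀ u, |u| ≤ |z| → |g u| ≤ K) :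
    |Gfun g z| ≤ K * |z| := by
  have hbound : ∀ u ∈ uIoc (0 : ℝ) z, ‖g u‖ ≤ K := fun u hu =>
    hK u (by simpa using abs_sub_left_of_mem_uIcc (uIoc_subset_uIcc hu))
  simpa [Gfun] using intervalIntegral.norm_integral_le_of_norm_le_const hbound

lemma mul_sq_le_mul_of_le_div {A x y : ℝ} (h : A ≤ y / x) : A * x ^ 2 ≤ x * y := by
  rcases eq_or_ne x 0 with rfl | hx
  · simp
  calc A * x ^ 2 ≤ y / x * x ^ 2 := by gcongr
    _ = x * y := by field_simp

/-- Under (H2), there exist `c₀ > 0` and `A₁ > 0` such that for every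
`c ≥ c₀` and every `(z,w)` on the level curve `w²/2 + G(z) = c` one has
`w² + z·g(z) ≥ A₁(z² + w²)`. -/
theorem radial_lower_bound_on_level_curves
    (g : ℝ → ℝ) (hg : Continuous g)
    (A₀ M₀ : ℝ) (hA₀ : 0 < A₀) (hM₀ : 0 < M₀)
    (hH2 : ∀ x : ℝ, M₀ ≤ |x| → A₀ ≤ g x / x) :
    ∃ c₀ A₁ : ℝ, 0 < c₀ ∧ 0 < A₁ ∧
      ∀ c : ℝ, c₀ ≤ c → ∀ z w : ℝ,
        w ^ 2 / 2 + Gfun g z = c →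
        A₁ * (z ^ 2 + w ^ 2) ≤ w ^ 2 + z * g z := by
  obtain ⟨K, hK0, hK⟩ := hg.exists_nonneg_bound_of_abs_le M₀
  refine ⟨2 * K * M₀ + M₀ ^ 2, min (1 / 2) A₀, by positivity, by positivity, ?_⟩
  rintro _ hc z w rfl
  have hA₁ : min (1 / 2) A₀ ≤ 1 / 2 := min_le_left _ _
  rcases le_or_gt |z| M₀ with hz | hz
  · have hG : |Gfun g z| ≤ K * M₀ :=
      (abs_Gfun_le fun u hu => hK u (hu.trans hz)).trans (by gcongr)
    have hzg : |z * g z| ≤ M₀ * K := by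
      rw [abs_mul]
      exact mul_le_mul hz (hK z hz) (abs_nonneg _) hM₀.le
    have hz2 : z ^ 2 ≤ M₀ ^ 2 := sq_le_sq' (abs_le.mp hz).1 (abs_le.mp hz).2
    nlinarith [abs_le.mp hG, abs_le.mp hzg, sq_nonneg w]
  · have hzg := mul_sq_le_mul_of_le_div (hH2 z hz.le)
    nlinarith [min_le_right (1 / 2) A₀, sq_nonneg z, sq_nonneg w]
end
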